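/- Tweedie's formula: if μ ∼ ϑ and X|μ ∼ N(μ,1), then the posterior mean satisfies E[μ | X = x] = x + f′(x)/f(x) = x + ∇ log f(x), where f = ϑ ∗ φ is the marginal density of X. -/

import Mathlib

/-!
The joint law `π` of `(X, μ)` has density `φ(x - m)` with respect to `Lebesgue ⊗ ϑ`, so for
every integrable `g` and measurable `A`,
`∫_{X ∈ A} g dπ = ∫_A ∫ φ(x - m) g(x, m) dϑ(m) dx`.
Since `f'(x) = ∫ (m - x) φ(x - m) dϑ(m)`, the posterior mean `c = x + f'/f` satisfies
`f(x) c(x) = ∫ m φ(x - m) dϑ(m)`, which makes the inner integrals for `g = μ` and `g = c(X)`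
agree pointwise. That `c(X)` is `π`-integrable follows from the same identity:
`∫ |c| dπ = ∫ |f c| dx ≤ ∫∫ |m| φ(x - m) dϑ dx = E|μ| < ∞`.
-/

open MeasureTheory ProbabilityTheory Filter

/-- Standard normal density. -/
noncomputable def stdGaussPDF (v : ℝ) : ℝ := (Real.sqrt (2 * Real.pi))⁻¹ * Real.exp (-v^2 / 2)

open scoped ENNReal

lemma gaussianPDFReal_one_eq_stdGaussPDF (m x : ℝ) :
    gaussianPDFReal m 1 x = stdGaussPDF (x - m) := by
  simp [gaussianPDFReal, stdGaussPDF, neg_div]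

lemma stdGaussPDF_nonneg (v : ℝ) : 0 ≤ stdGaussPDF v := by
  unfold stdGaussPDF; positivity

@[fun_prop]
lemma continuous_stdGaussPDF : Continuous stdGaussPDF := by
  unfold stdGaussPDF; fun_prop

lemma norm_stdGaussPDF_le (v : ℝ) : ‖stdGaussPDF v‖ ≤ (Real.sqrt (2 * Real.pi))⁻¹ := by
  rw [Real.norm_of_nonneg (stdGaussPDF_nonneg v), stdGaussPDF]
  exact mul_le_of_le_one_right (by positivity)
    (Real.exp_le_one_iff.mpr (by nlinarith [sq_nonneg v]))

lemma integrable_stdGaussPDF_sub (ν : Measure ℝ) [IsFiniteMeasure ν] (x : ℝ) :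
    Integrable (fun m => stdGaussPDF (x - m)) ν :=
  .of_bound (by fun_prop) _ (.of_forall fun m => norm_stdGaussPDF_le (x - m))

lemma integral_stdGaussPDF_sub_mul_eq {ν : Measure ℝ} [IsFiniteMeasure ν]
    (hmom : Integrable (fun m => m) ν) (x : ℝ) :
    ∫ m, stdGaussPDF (x - m) * m ∂ν =
      x * ∫ m, stdGaussPDF (x - m) ∂ν + ∫ m, -((x - m) * stdGaussPDF (x - m)) ∂ν := by
  have hφ := integrable_stdGaussPDF_sub ν x
  have hφm : Integrable (fun m => stdGaussPDF (x - m) * m) ν :=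
    hmom.bdd_mul (by fun_prop) (.of_forall fun m => norm_stdGaussPDF_le (x - m))
  have hdrift : ∫ m, -((x - m) * stdGaussPDF (x - m)) ∂ν =
      ∫ m, stdGaussPDF (x - m) * m ∂ν - x * ∫ m, stdGaussPDF (x - m) ∂ν := by
    rw [← integral_const_mul, ← integral_sub hφm (hφ.const_mul x)]
    congr with m
    ring
  rw [hdrift]
  ring

lemma bind_map_prodMk_eq_map_swap_compProd {α β : Type*} [MeasurableSpace α]
    [MeasurableSpace β] (μ : Measure α) [SFinite μ] (κ : Kernel α β) [IsSFiniteKernel κ] :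
    μ.bind (fun a => (κ a).map fun b => (b, a)) = (μ ⊗ₘ κ).map Prod.swap := by
  rw [Measure.compProd_eq_comp_prod, Measure.map_comp _ _ measurable_swap,
    ← Kernel.swap_comp_eq_map, Kernel.swap_prod]
  congr with a : 1
  rw [Kernel.prod_apply, Kernel.id_apply, Measure.prod_dirac]

noncomputable def gaussianLocationKernel : Kernel ℝ ℝ where
  toFun m := gaussianReal m 1
  measurable' := measurable_gaussianReal.comp (measurable_id.prodMk measurable_const)

instance : IsMarkovKernel gaussianLocationKernel :=
  ⟨fun m => inferInstanceAs (IsProbabilityMeasure (gaussianReal m 1))⟩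

lemma gaussianLocationKernel_apply (m : ℝ) : gaussianLocationKernel m = gaussianReal m 1 := rfl

lemma measurable_gaussianPDF_one_uncurry :
    Measurable fun p : ℝ × ℝ => gaussianPDF p.1 1 p.2 := by
  unfold gaussianPDF gaussianPDFReal
  fun_prop

lemma compProd_gaussianLocationKernel (ϑ : Measure ℝ) [SFinite ϑ] :
    ϑ ⊗ₘ gaussianLocationKernel =
      (ϑ.prod volume).withDensity fun p => gaussianPDF p.1 1 p.2 := by
  have hρ := measurable_gaussianPDF_one_uncurry
  have hκ : gaussianLocationKernel =
      (Kernel.const ℝ volume).withDensity fun m x => gaussianPDF m 1 x := by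
    ext m : 1
    rw [Kernel.withDensity_apply _ hρ, Kernel.const_apply, gaussianLocationKernel_apply,
      gaussianReal_of_var_ne_zero _ one_ne_zero]
  have := Kernel.IsSFiniteKernel.withDensity (Kernel.const ℝ volume) fun m x =>
    gaussianPDF_ne_top (μ := m) (v := 1) (x := x)
  rw [hκ, Measure.compProd_withDensity hρ, Measure.compProd_const]

/-- The law `π` of `(X, μ)` when `μ ∼ ϑ` and `X | μ ∼ N(μ, 1)`; note the order of coordinates. -/
noncomputable def gaussianLocationJoint (ϑ : Measure ℝ) : Measure (ℝ × ℝ) :=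
  (ϑ ⊗ₘ gaussianLocationKernel).map Prod.swap

section Joint

variable (ϑ : Measure ℝ)

lemma gaussianLocationJoint_eq_bind [SFinite ϑ] :
    gaussianLocationJoint ϑ = ϑ.bind fun m => (gaussianReal m 1).map fun x => (x, m) :=
  (bind_map_prodMk_eq_map_swap_compProd ϑ gaussianLocationKernel).symm

lemma map_snd_gaussianLocationJoint [SFinite ϑ] :
    (gaussianLocationJoint ϑ).map Prod.snd = ϑ := by
  rw [gaussianLocationJoint, Measure.map_map measurable_snd measurable_swap]
  exact Measure.fst_compProd ϑ gaussianLocationKernel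

lemma lintegral_gaussianLocationJoint [SFinite ϑ] {g : ℝ × ℝ → ℝ≥0∞} (hg : Measurable g) :
    ∫⁻ z, g z ∂gaussianLocationJoint ϑ =
      ∫⁻ x, ∫⁻ m, ENNReal.ofReal (stdGaussPDF (x - m)) * g (x, m) ∂ϑ := by
  rw [gaussianLocationJoint, lintegral_map hg measurable_swap, compProd_gaussianLocationKernel,
    lintegral_withDensity_eq_lintegral_mul _ measurable_gaussianPDF_one_uncurry
      (g := fun p => g p.swap) (hg.comp measurable_swap),
    lintegral_prod_symm']
  · simp [gaussianPDF, gaussianPDFReal_one_eq_stdGaussPDF]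
  · exact measurable_gaussianPDF_one_uncurry.mul (hg.comp measurable_swap)

lemma integral_gaussianLocationJoint [SFinite ϑ] {g : ℝ × ℝ → ℝ}
    (hg : Integrable g (gaussianLocationJoint ϑ)) :
    ∫ z, g z ∂gaussianLocationJoint ϑ = ∫ x, ∫ m, stdGaussPDF (x - m) * g (x, m) ∂ϑ := by
  rw [gaussianLocationJoint, compProd_gaussianLocationKernel] at hg ⊢
  have hg_prod := hg
  rw [integrable_map_measure hg.aestronglyMeasurable measurable_swap.aemeasurable,
    integrable_withDensity_iff_integrable_smul' measurable_gaussianPDF_one_uncurry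
      (.of_forall fun _ => gaussianPDF_lt_top)] at hg_prod
  rw [integral_map measurable_swap.aemeasurable hg.aestronglyMeasurable,
    integral_withDensity_eq_integral_toReal_smul measurable_gaussianPDF_one_uncurry
      (.of_forall fun _ => gaussianPDF_lt_top), integral_prod_symm _ (by exact hg_prod)]
  simp [gaussianPDF, gaussianPDFReal_one_eq_stdGaussPDF,
    ENNReal.toReal_ofReal (stdGaussPDF_nonneg _)]

lemma setIntegral_fst_mem_gaussianLocationJoint [SFinite ϑ] {g : ℝ × ℝ → ℝ}
    (hg : Integrable g (gaussianLocationJoint ϑ)) {A : Set ℝ} (hA : MeasurableSet A) :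
    ∫ z in {z : ℝ × ℝ | z.1 ∈ A}, g z ∂gaussianLocationJoint ϑ =
      ∫ x in A, ∫ m, stdGaussPDF (x - m) * g (x, m) ∂ϑ := by
  have hS : MeasurableSet {z : ℝ × ℝ | z.1 ∈ A} := measurable_fst hA
  rw [← integral_indicator hS, integral_gaussianLocationJoint ϑ (hg.indicator hS),
    ← integral_indicator hA]
  congr with x
  by_cases hx : x ∈ A <;> simp [hx]

lemma integrable_snd_gaussianLocationJoint [SFinite ϑ] (hmom : Integrable (fun m => m) ϑ) :
    Integrable Prod.snd (gaussianLocationJoint ϑ) := by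
  rw [← map_snd_gaussianLocationJoint ϑ] at hmom
  exact (integrable_map_measure hmom.aestronglyMeasurable measurable_snd.aemeasurable).mp hmom

lemma integrable_comp_fst_gaussianLocationJoint [IsFiniteMeasure ϑ]
    (hmom : Integrable (fun m => m) ϑ) {c : ℝ → ℝ} (hc : Measurable c)
    (hpost : ∀ x, (∫ m, stdGaussPDF (x - m) ∂ϑ) * c x = ∫ m, stdGaussPDF (x - m) * m ∂ϑ) :
    Integrable (fun z => c z.1) (gaussianLocationJoint ϑ) := by
  refine ⟨(hc.comp measurable_fst).aestronglyMeasurable, ?_⟩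
  calc ∫⁻ z, ‖c z.1‖ₑ ∂gaussianLocationJoint ϑ
      = ∫⁻ x, ‖∫ m, stdGaussPDF (x - m) * m ∂ϑ‖ₑ := by
        rw [lintegral_gaussianLocationJoint ϑ (g := fun z => ‖c z.1‖ₑ) (by fun_prop)]
        congr with x
        dsimp only
        rw [lintegral_mul_const _ (by fun_prop), ← ofReal_integral_eq_lintegral_ofReal
          (integrable_stdGaussPDF_sub ϑ x) (.of_forall fun _ => stdGaussPDF_nonneg _), ← hpost,
          enorm_mul, Real.enorm_of_nonneg (integral_nonneg fun _ => stdGaussPDF_nonneg _)]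
    _ ≤ ∫⁻ x, ∫⁻ m, ‖stdGaussPDF (x - m) * m‖ₑ ∂ϑ :=
        lintegral_mono fun x => enorm_integral_le_lintegral_enorm _
    _ = ∫⁻ z, ‖z.2‖ₑ ∂gaussianLocationJoint ϑ := by
        rw [lintegral_gaussianLocationJoint ϑ (g := fun z => ‖z.2‖ₑ) (by fun_prop)]
        simp only [enorm_mul, Real.enorm_of_nonneg (stdGaussPDF_nonneg _)]
    _ < ⊤ := (integrable_snd_gaussianLocationJoint ϑ hmom).hasFiniteIntegral

end Joint

/-- The posterior-mean property is expressed by equality of integrals over all events `{X ∈ A}`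
under the joint distribution `π` of `(X, μ)`. -/
theorem tweedie_formula_general (ϑ : Measure ℝ) [IsProbabilityMeasure ϑ]
    (hmom : Integrable (fun m => m) ϑ)
    (f f' : ℝ → ℝ)
    (hf : ∀ x, f x = ∫ m, stdGaussPDF (x - m) ∂ϑ)
    (hf' : ∀ x, f' x = ∫ m, -((x - m) * stdGaussPDF (x - m)) ∂ϑ)
    (hfpos : ∀ x, 0 < f x) :
    ∀ A : Set ℝ, MeasurableSet A →
      ∫ z in {z : ℝ × ℝ | z.1 ∈ A}, z.2
          ∂(Measure.bind ϑ (fun m => Measure.map (fun x => (x, m)) (gaussianReal m 1))) =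
        ∫ z in {z : ℝ × ℝ | z.1 ∈ A}, z.1 + f' z.1 / f z.1
          ∂(Measure.bind ϑ (fun m => Measure.map (fun x => (x, m)) (gaussianReal m 1))) := by
  intro A hA
  have hf_meas : Measurable f := by
    rw [funext hf]
    exact (Continuous.stronglyMeasurable (f := fun p : ℝ × ℝ => stdGaussPDF (p.1 - p.2))
      (by fun_prop)).integral_prod_right'.measurable
  have hf'_meas : Measurable f' := by
    rw [funext hf']
    exact (Continuous.stronglyMeasurable
      (f := fun p : ℝ × ℝ => -((p.1 - p.2) * stdGaussPDF (p.1 - p.2)))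
      (by fun_prop)).integral_prod_right'.measurable
  have hpost : ∀ x, f x * (x + f' x / f x) = ∫ m, stdGaussPDF (x - m) * m ∂ϑ := fun x => by
    rw [integral_stdGaussPDF_sub_mul_eq hmom, ← hf, ← hf']
    field_simp [(hfpos x).ne']
  rw [← gaussianLocationJoint_eq_bind,
    setIntegral_fst_mem_gaussianLocationJoint ϑ (integrable_snd_gaussianLocationJoint ϑ hmom) hA,
    setIntegral_fst_mem_gaussianLocationJoint ϑ (integrable_comp_fst_gaussianLocationJoint ϑ hmom
      (c := fun x => x + f' x / f x) (by fun_prop) fun x => by rw [← hf, hpost]) hA]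
  refine setIntegral_congr_fun hA fun x _ => ?_
  dsimp only
  rw [integral_mul_const, ← hf, hpost]

/-- Tweedie's formula: if `μ ∼ ϑ` and `X | μ ∼ N(μ, 1)`, then the posterior mean satisfies
`E[μ | X = x] = x + f′(x)/f(x)` where `f = ϑ ∗ φ` is the marginal density of `X`.  The
posterior-mean property is expressed by equality of integrals over all events `{X ∈ A}` under
the joint distribution `π` of `(X, μ)`. -/
theorem tweedie_formula (ϑ : Measure ℝ) [IsProbabilityMeasure ϑ]
    (hmom : Integrable (fun m => m) ϑ)
    (f f' : ℝ → ℝ)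
    (hf : ∀ x, f x = ∫ m, stdGaussPDF (x - m) ∂ϑ)
    (hf' : ∀ x, f' x = ∫ m, -((x - m) * stdGaussPDF (x - m)) ∂ϑ)
    (hfderiv : ∀ x, HasDerivAt f (f' x) x)
    (hfpos : ∀ x, 0 < f x) :
    ∀ A : Set ℝ, MeasurableSet A →
      ∫ z in {z : ℝ × ℝ | z.1 ∈ A}, z.2
          ∂(Measure.bind ϑ (fun m => Measure.map (fun x => (x, m)) (gaussianReal m 1))) =
        ∫ z in {z : ℝ × ℝ | z.1 ∈ A}, z.1 + f' z.1 / f z.1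
          ∂(Measure.bind ϑ (fun m => Measure.map (fun x => (x, m)) (gaussianReal m 1))) :=
  tweedie_formula_general ϑ hmom f f' hf hf' hfpos
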